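/- Let K be a field. The polynomial det((X_{mn})_{mn}) − det((Y_{mn})_{mn}) in the 8 variables X_{11}, X_{12}, X_{21}, X_{22}, Y_{11}, Y_{12}, Y_{21}, Y_{22} over K is irreducible. -/

import Mathlib

/-!
Since `det X - det Y = X₁₁ X₂₂ + g` with `g = -X₁₂ X₂₁ - det Y`, the polynomial is linear in
`X₁₁` with leading coefficient `X₂₂`. Neither `X₁₁` nor `X₂₂` occurs in `g ≠ 0`, so the prime
`X₂₂` does not divide `g`. By Gauss's lemma over the ring of the other variables, a polynomial
`f * X i + g` with `f`, `g` relatively prime and free of `X i` is irreducible.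
-/

open MvPolynomial

namespace MvPolynomial

variable {σ R : Type*} [CommRing R]

theorem vars_X_mul_X_subset [Nontrivial R] [DecidableEq σ] (a b : σ) :
    (X a * X b : MvPolynomial σ R).vars ⊆ {a, b} := by
  simpa only [vars_X, Finset.insert_eq] using vars_mul (X a : MvPolynomial σ R) (X b)

theorem not_X_dvd_of_notMem_vars {j : σ} {g : MvPolynomial σ R} (hj : j ∉ g.vars)
    (hg : g ≠ 0) : ¬ X j ∣ g := by
  have hmod : g = g.modMonomial (Finsupp.single j 1) :=
    eq_modMonomial_single (q := 0) (by simp) fun n hn => by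
      by_contra h
      exact hj ((mem_vars_iff_mem_support j).mpr ⟨n, hn, Finsupp.mem_support_iff.mpr h⟩)
  rwa [X_dvd_iff_modMonomial_eq_zero, ← hmod]

variable [IsDomain R]

theorem irreducible_X_mul_X_add {i j : σ} {g : MvPolynomial σ R} (hij : i ≠ j)
    (hi : i ∉ g.vars) (hj : j ∉ g.vars) (hg : g ≠ 0) : Irreducible (X i * X j + g) := by
  rw [mul_comm]
  refine irreducible_mul_X_add _ _ _ (X_ne_zero j) (by simpa [vars_X] using hij) hi ?_
  exact X_prime.irreducible.isRelPrime_iff_not_dvd.mpr (not_X_dvd_of_notMem_vars hj hg)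

end MvPolynomial

/-- The polynomial `det((X_{mn})) − det((Y_{mn}))` in 8 variables is irreducible.
Variables are indexed by `Fin 2 × Fin 2 × Fin 2`, the first component distinguishing
the `X` and `Y` matrices. -/
theorem det_diff_irreducible (K : Type*) [Field K] :
    Irreducible
      ((Matrix.of fun m n => (X (0, m, n) : MvPolynomial (Fin 2 × Fin 2 × Fin 2) K)).det -
        (Matrix.of fun m n => (X (1, m, n) : MvPolynomial (Fin 2 × Fin 2 × Fin 2) K)).det) := by
  classical
  set g : MvPolynomial (Fin 2 × Fin 2 × Fin 2) K :=
    -(X (0, 0, 1) * X (0, 1, 0)) - (X (1, 0, 0) * X (1, 1, 1) - X (1, 0, 1) * X (1, 1, 0))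
  have hdet : (Matrix.of fun m n => (X (0, m, n) : MvPolynomial _ K)).det -
      (Matrix.of fun m n => X (1, m, n)).det = X (0, 0, 0) * X (0, 1, 1) + g := by
    simp only [Matrix.det_fin_two, Matrix.of_apply, g]
    ring
  have hvars : g.vars ⊆ {(0, 0, 1), (0, 1, 0), (1, 0, 0), (1, 1, 1), (1, 0, 1), (1, 1, 0)} := by
    refine (vars_sub_subset _).trans (Finset.union_subset ?_
      ((vars_sub_subset _).trans (Finset.union_subset ?_ ?_)))
    · rw [vars_neg]
      exact (vars_X_mul_X_subset _ _).trans (by decide)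
    all_goals exact (vars_X_mul_X_subset _ _).trans (by decide)
  have hg : g ≠ 0 := fun h => by
    simpa [g] using congrArg (eval fun v => if v = (0, 0, 1) ∨ v = (0, 1, 0) then (1 : K) else 0) h
  rw [hdet]
  exact irreducible_X_mul_X_add (by decide) (fun h => by simpa using hvars h)
    (fun h => by simpa using hvars h) hg
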